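/- arXiv:2201.02514 — 4 statements merged into one kernel-verified Lean document; each statement's English description precedes it below -/
import Mathlib

section
/- Let n = 2^r, σ ≥ 1, f > 0 integers and δ an integer with 0 ≤ δ < f. Set x = f + δ and suppose k ≤ δ·n/f + σ (over the rationals) with k ≥ 0. Then log₂(n + k) - log₂(x) ≤ log₂(n/f) + (σ/n)·log₂(e). -/
open Real

theorem Real.logb_one_add_le_mul_logb_exp {b t : ℝ} (hb : 1 < b) (ht : -1 < t) :
    logb b (1 + t) ≤ t * logb b (exp 1) := by
  have hlog : log (1 + t) ≤ t := by linarith [log_le_sub_one_of_pos (by linarith : 0 < 1 + t)]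
  rw [logb, logb, log_exp, mul_one_div]
  exact div_le_div_of_nonneg_right hlog (log_pos hb).le

/-- The first summand of the right-hand side, `n + δ n / f`, is the exact rescaling of `f + δ`;
the slack `σ` is absorbed by the factor `1 + σ / n`. -/
theorem add_le_div_mul_add_mul_one_add_div {n f δ σ k : ℝ} (hn : 0 < n) (hf : 0 < f)
    (hδ : 0 ≤ δ) (hσ : 0 ≤ σ) (hk : k ≤ δ * n / f + σ) :
    n + k ≤ n / f * (f + δ) * (1 + σ / n) := by
  have hexpand : n / f * (f + δ) * (1 + σ / n) = n + δ * n / f + σ * (f + δ) / f := by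
    field_simp
  have hslack : σ ≤ σ * (f + δ) / f := by
    rw [le_div_iff₀ hf]
    nlinarith
  linarith

theorem per_letter_redundancy_simplified_general (r σ f δ : ℕ) (n : ℕ) (hn : n = 2 ^ r)
    (hf : 0 < f) (x : ℕ) (hx : x = f + δ)
    (k : ℝ) (hk0 : 0 ≤ k) (hk : k ≤ (δ : ℝ) * n / f + σ) :
    Real.logb 2 ((n : ℝ) + k) - Real.logb 2 (x : ℝ) ≤
      Real.logb 2 ((n : ℝ) / f) + ((σ : ℝ) / n) * Real.logb 2 (Real.exp 1) := by
  have hn0 : (0 : ℝ) < n := by rw [hn]; positivity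
  have hf0 : (0 : ℝ) < f := by exact_mod_cast hf
  have hx0 : (0 : ℝ) < x := by rw [hx]; positivity
  have hbound : (n : ℝ) + k ≤ n / f * x * (1 + σ / n) := by
    rw [hx, Nat.cast_add]
    exact add_le_div_mul_add_mul_one_add_div hn0 hf0 δ.cast_nonneg σ.cast_nonneg hk
  calc logb 2 ((n : ℝ) + k) - logb 2 x
      ≤ logb 2 (n / f * x * (1 + σ / n)) - logb 2 x := by
        gcongr
        linarith
    _ = logb 2 (n / f) + logb 2 (1 + σ / n) := by
        rw [logb_mul (by positivity) (by positivity), logb_mul (by positivity) (by positivity)]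
        ring
    _ ≤ logb 2 (n / f) + σ / n * logb 2 (exp 1) := by
        gcongr
        have hσn : (0 : ℝ) ≤ σ / n := by positivity
        exact logb_one_add_le_mul_logb_exp one_lt_two (by linarith)

theorem per_letter_redundancy_simplified (r σ f δ : ℕ) (n : ℕ) (hn : n = 2 ^ r)
    (hσ : 1 ≤ σ) (hf : 0 < f) (hδ : δ < f) (x : ℕ) (hx : x = f + δ)
    (k : ℝ) (hk0 : 0 ≤ k) (hk : k ≤ (δ : ℝ) * n / f + σ) :
    Real.logb 2 ((n : ℝ) + k) - Real.logb 2 (x : ℝ) ≤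
      Real.logb 2 ((n : ℝ) / f) + ((σ : ℝ) / n) * Real.logb 2 (Real.exp 1) :=
  per_letter_redundancy_simplified_general r σ f δ n hn hf x hx k hk0 hk
end

section
/- Let n, f, σ be positive integers and δ an integer with 0 ≤ δ < f. Set x = f + δ and suppose k ≤ (δ + 1/2)·n/f + σ/2 (over the rationals) with k ≥ 0. Then log₂(n + k) - log₂(x) ≤ log₂(n/f) + (1/(2f) + σ/(2n))·log₂(e). -/
theorem per_letter_redundancy_duda (n σ f δ : ℕ) (hn : 0 < n) (hσ : 0 < σ)
    (hf : 0 < f) (hδ : δ < f) (x : ℕ) (hx : x = f + δ)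
    (k : ℝ) (hk0 : 0 ≤ k) (hk : k ≤ ((δ : ℝ) + 1 / 2) * n / f + σ / 2) :
    Real.logb 2 ((n : ℝ) + k) - Real.logb 2 (x : ℝ) ≤
      Real.logb 2 ((n : ℝ) / f) +
        (1 / (2 * (f : ℝ)) + (σ : ℝ) / (2 * n)) * Real.logb 2 (Real.exp 1) := by
  have hn' : (0:ℝ) < n := by exact_mod_cast hn
  have hf' : (0:ℝ) < f := by exact_mod_cast hf
  have hσ' : (0:ℝ) < σ := by exact_mod_cast hσ
  have hδ0 : (0:ℝ) ≤ δ := by positivity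
  have hx2 : (x:ℝ) = f + δ := by rw [hx]; push_cast; ring
  have hx' : (0:ℝ) < x := by rw [hx2]; linarith
  set A : ℝ := 1 / (2 * (f:ℝ)) + (σ:ℝ) / (2 * n) with hA
  have hA0 : (0:ℝ) < A := by positivity
  clear_value A
  have key2 : (n:ℝ) + (((δ:ℝ) + 1/2) * n / f + σ / 2) ≤ (n/f) * ((f:ℝ) + δ) * (1 + A) := by
    rw [hA]
    have e1 : ((n:ℝ)/f) * ((f:ℝ) + δ) * (1 + (1 / (2 * (f:ℝ)) + (σ:ℝ) / (2 * n)))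
        - ((n:ℝ) + (((δ:ℝ) + 1/2) * n / f + σ / 2))
        = (n:ℝ) * δ / (2 * f * f) + (σ:ℝ) * δ / (2 * f) := by
      field_simp
      ring
    have hnn : (0:ℝ) ≤ (n:ℝ) * δ / (2 * f * f) + (σ:ℝ) * δ / (2 * f) := by positivity
    linarith
  have key : (n:ℝ) + k ≤ (n/f) * x * (1 + A) := by
    rw [hx2]; linarith
  have hpos1 : (0:ℝ) < (n:ℝ) + k := by linarith
  have hpos2 : (0:ℝ) < (n:ℝ)/f * x * (1 + A) := by positivity
  have hlog2 : (0:ℝ) < Real.log 2 := Real.log_pos one_lt_two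
  have h1 : Real.logb 2 ((n:ℝ) + k) ≤ Real.logb 2 ((n/f) * x * (1 + A)) := by
    rw [Real.logb, Real.logb]
    gcongr
  have h2 : Real.logb 2 ((n:ℝ)/f * (x:ℝ) * (1 + A)) =
      Real.logb 2 ((n:ℝ)/f) + Real.logb 2 (x:ℝ) + Real.logb 2 (1 + A) := by
    rw [Real.logb_mul (by positivity) (by positivity),
        Real.logb_mul (by positivity) (by positivity)]
  have h3 : Real.logb 2 (1 + A) ≤ A * Real.logb 2 (Real.exp 1) := by
    have hle : Real.log (1 + A) ≤ A := by
      have := Real.log_le_sub_one_of_pos (x := 1 + A) (by linarith)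
      linarith
    rw [Real.logb, Real.logb, Real.log_exp]
    rw [div_le_iff₀ hlog2]
    calc Real.log (1 + A) ≤ A := hle
      _ = A * (1 / Real.log 2) * Real.log 2 := by field_simp
  calc Real.logb 2 ((n:ℝ) + k) - Real.logb 2 (x:ℝ)
      ≤ Real.logb 2 ((n:ℝ)/f) + Real.logb 2 (1 + A) := by rw [h2] at h1; linarith
    _ ≤ _ := by rw [hA] at h3 ⊢; linarith
end

section
/- Let f > 0, r ≥ 0, and c ≥ 0 be integers with c + f ≤ 2^r, and let x be an integer with f·2^k ≤ x < f·2^(k+1) for an integer k ≥ 0. Define x' = ⌊x/f⌋·2^r + c + (x mod f). Then 2^(r+k) ≤ x' < 2^(r+k+1). -/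
/-!
The quotient `x / f` lies in `[2^k, 2^(k+1))` and the low part `c + x % f` is below `2^r`
(as `x % f < f` and `c + f ≤ 2^r`), so `x / f * 2^r + (c + x % f)` is squeezed between
`2^k * 2^r` and `2^(k+1) * 2^r`.
-/

namespace Nat

theorem mul_add_lt_mul_of_lt {q a m s : ℕ} (hq : q < a) (hs : s < m) : q * m + s < a * m :=
  calc q * m + s < (q + 1) * m := by rw [Nat.succ_mul]; omega
    _ ≤ a * m := Nat.mul_le_mul_right m hq

theorem le_div_and_div_lt_of_mul_le_of_lt_mul {x f a b : ℕ} (hf : 0 < f) (ha : f * a ≤ x)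
    (hb : x < f * b) : a ≤ x / f ∧ x / f < b :=
  ⟨(Nat.le_div_iff_mul_le hf).mpr (by rwa [mul_comm]),
    (Nat.div_lt_iff_lt_mul hf).mpr (by rwa [mul_comm])⟩

end Nat

theorem rans_fits (f c x r k : ℕ) (hf : 0 < f) (hcf : c + f ≤ 2 ^ r)
    (h1 : f * 2 ^ k ≤ x) (h2 : x < f * 2 ^ (k + 1)) :
    2 ^ (r + k) ≤ x / f * 2 ^ r + c + x % f ∧
      x / f * 2 ^ r + c + x % f < 2 ^ (r + k + 1) := by
  obtain ⟨hq_lo, hq_hi⟩ := Nat.le_div_and_div_lt_of_mul_le_of_lt_mul hf h1 h2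
  have hslot : c + x % f < 2 ^ r := by
    have := Nat.mod_lt x hf
    omega
  rw [add_assoc]
  constructor
  · calc 2 ^ (r + k) = 2 ^ k * 2 ^ r := by ring
      _ ≤ x / f * 2 ^ r := Nat.mul_le_mul_right _ hq_lo
      _ ≤ _ := Nat.le_add_right _ _
  · calc _ < 2 ^ (k + 1) * 2 ^ r := Nat.mul_add_lt_mul_of_lt hq_hi hslot
      _ = 2 ^ (r + k + 1) := by ring
end

section
/- Let f > 0, r ≥ 0, c ≥ 0 be integers with c + f ≤ 2^r, and let x be an integer with f·2^k ≤ x < f·2^(k+1). Define x' = ⌊x/f⌋·2^r + c + (x mod f). Then x = ⌊x'/2^r⌋·f + (x' mod 2^r) − c. -/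
theorem rans_slot_lt {f c M : ℕ} (x : ℕ) (hf : 0 < f) (hcf : c + f ≤ M) : c + x % f < M :=
  lt_of_lt_of_le (Nat.add_lt_add_left (Nat.mod_lt x hf) c) hcf

theorem rans_encode_div_mod {f c M : ℕ} (x : ℕ) (hf : 0 < f) (hcf : c + f ≤ M) :
    (x / f * M + c + x % f) / M = x / f ∧ (x / f * M + c + x % f) % M = c + x % f :=
  (Nat.div_mod_unique (by omega)).2 ⟨by ring, rans_slot_lt x hf hcf⟩

theorem rans_decode_correct_general (f c x r : ℕ) (hf : 0 < f) (hcf : c + f ≤ 2 ^ r) :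
    x = (x / f * 2 ^ r + c + x % f) / 2 ^ r * f +
          (x / f * 2 ^ r + c + x % f) % 2 ^ r - c := by
  obtain ⟨hdiv, hmod⟩ := rans_encode_div_mod x hf hcf
  rw [hdiv, hmod]
  have := Nat.div_add_mod' x f
  omega

theorem rans_decode_correct (f c x r k : ℕ) (hf : 0 < f) (hcf : c + f ≤ 2 ^ r)
    (h1 : f * 2 ^ k ≤ x) (h2 : x < f * 2 ^ (k + 1)) :
    x = (x / f * 2 ^ r + c + x % f) / 2 ^ r * f +
          (x / f * 2 ^ r + c + x % f) % 2 ^ r - c :=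
  rans_decode_correct_general f c x r hf hcf
end
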